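/- (Internalization for J.) For any justification formulas α, β_1, …, β_n and any justification terms t_1, …, t_n: if β_1, …, β_n ⊢_J α, then there exists a justification term t such that t_1 : β_1, …, t_n : β_n ⊢_J t : α. -/
import Mathlib


/-- Justification terms: `t ::= c | x | (t·t) | (t+t) | !t`, over countably many
constants and countably many variables (both indexed by `ℕ`). -/
inductive Tm : Type where
  | const : ℕ → Tm
  | fvar : ℕ → Tm
  | app : Tm → Tm → Tm
  | plus : Tm → Tm → Tm
  | bang : Tm → Tm
deriving DecidableEq

/-- Justification formulas (the language `L_J`):
`α ::= p | t:α | ¬α | α ∧ α`. -/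
inductive JForm : Type where
  | atom : ℕ → JForm
  | just : Tm → JForm → JForm
  | neg : JForm → JForm
  | conj : JForm → JForm → JForm
deriving DecidableEq

/-- Disjunction `α ∨ β := ¬(¬α ∧ ¬β)`. -/
def JForm.disj (α β : JForm) : JForm := .neg (.conj (.neg α) (.neg β))

/-- Implication `α → β := ¬α ∨ β`. -/
def JForm.imp (α β : JForm) : JForm := (JForm.neg α).disj β

/-- `!^n c`: iterated application of `!` to the constant `c`. -/
def iterBang : ℕ → ℕ → Tm
  | 0, c => .const c
  | n + 1, c => .bang (iterBang n c)

/-- `anChain c α n = !^n c : !^{n-1} c : ⋯ : !c : c : α`. -/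
def anChain (c : ℕ) (α : JForm) : ℕ → JForm
  | 0 => .just (.const c) α
  | n + 1 => .just (iterBang (n + 1) c) (anChain c α n)

/-- The axioms of the deductive system `J`: a finite set of schemata axiomatizing
classical propositional logic in `L_J` (here: the standard Hilbert schemata for
`→`/`¬` together with the schemata for `∧`), the application axiom, and the
monotonicity axiom. -/
inductive JAxiom : JForm → Prop where
  | p1 (α β : JForm) : JAxiom (α.imp (β.imp α))
  | p2 (α β γ : JForm) :
      JAxiom ((α.imp (β.imp γ)).imp ((α.imp β).imp (α.imp γ)))
  | p3 (α β : JForm) : JAxiom (((JForm.neg α).imp (JForm.neg β)).imp (β.imp α))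
  | conj1 (α β : JForm) : JAxiom ((JForm.conj α β).imp α)
  | conj2 (α β : JForm) : JAxiom ((JForm.conj α β).imp β)
  | conj3 (α β : JForm) : JAxiom (α.imp (β.imp (JForm.conj α β)))
  | jApp (s t : Tm) (α β : JForm) :
      JAxiom ((JForm.just s (α.imp β)).imp
        ((JForm.just t α).imp (JForm.just (Tm.app s t) β)))
  | jPlus (s t : Tm) (α : JForm) :
      JAxiom (((JForm.just s α).disj (JForm.just t α)).imp
        (JForm.just (Tm.plus s t) α))

/-- Derivability `T ⊢_J α` in the deductive system `J`: axioms, premises,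
modus ponens, and the rule `AN!`
(`⊢ !^n c : !^{n-1} c : ⋯ : !c : c : α` for every constant `c`, every axiom
instance `α`, and every `n ∈ ℕ`). -/
inductive JDeriv (T : Set JForm) : JForm → Prop where
  | ax {α : JForm} : JAxiom α → JDeriv T α
  | prem {α : JForm} : α ∈ T → JDeriv T α
  | mp {α β : JForm} : JDeriv T (α.imp β) → JDeriv T α → JDeriv T β
  | an (c : ℕ) (n : ℕ) {α : JForm} : JAxiom α → JDeriv T (anChain c α n)

/-- **Internalization for J.**
For any justification formulas `α, β₁, …, βₙ` and any justification terms
`t₁, …, tₙ`: if `β₁, …, βₙ ⊢_J α`, then there exists a justification term `t`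
such that `t₁:β₁, …, tₙ:βₙ ⊢_J t:α`. -/
theorem j_internalization (n : ℕ) (β : Fin n → JForm) (t : Fin n → Tm)
    (α : JForm) (h : JDeriv (Set.range β) α) :
    ∃ s : Tm, JDeriv (Set.range fun i => JForm.just (t i) (β i)) (JForm.just s α) := by
  induction h with
  | ax hα => exact ⟨.const 0, JDeriv.an 0 0 hα⟩
  | prem hm =>
      obtain ⟨i, rfl⟩ := hm
      exact ⟨t i, JDeriv.prem ⟨i, rfl⟩⟩
  | mp _ _ ih1 ih2 =>
      obtain ⟨s1, h1⟩ := ih1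
      obtain ⟨s2, h2⟩ := ih2
      exact ⟨.app s1 s2, JDeriv.mp (JDeriv.mp (JDeriv.ax (JAxiom.jApp _ _ _ _)) h1) h2⟩
  | an c m hα => exact ⟨iterBang (m + 1) c, JDeriv.an c (m + 1) hα⟩
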